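/- Each static butterfly is counted exactly once under the vertex-priority scheme: let u, w be the two upper-layer vertices and v, x the two lower-layer vertices of a butterfly, and let their priorities p_u, p_w, p_v, p_x be four pairwise distinct real numbers. Among the four ordered same-layer pairs (s, o) ∈ {(u, w), (w, u), (v, x), (x, v)}, there is exactly one pair (s, o) such that both wedges from start-vertex s through the two opposite-layer middle-vertices m_1, m_2 to end-vertex o satisfy the priority condition p_s > p_{m_1}, p_s > p_{m_2}, and p_s > p_o. -/

import Mathlib

/-! Each of the four ordered pairs has a different start vertex, and the other three entries of its
quadruple are exactly the remaining three vertices. So the pair qualifies precisely when its start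
vertex has the largest priority of the butterfly, and four distinct reals have exactly one maximum. -/

theorem Function.Injective.existsUnique_forall_ne_lt {ι α : Type*} [Finite ι] [Nonempty ι]
    [LinearOrder α] {f : ι → α} (hf : Function.Injective f) :
    ∃! i, ∀ j, j ≠ i → f j < f i := by
  obtain ⟨i, hi⟩ := Finite.exists_max f
  refine ⟨i, fun j hj => (hi j).lt_of_ne (hf.ne hj), fun i' hi' => ?_⟩
  by_contra hne
  exact (hi' i (Ne.symm hne)).not_ge (hi i')

theorem injective_vec4_of_pairwise_ne {α : Type*} {a b c d : α}
    (h : a ≠ b ∧ a ≠ c ∧ a ≠ d ∧ b ≠ c ∧ b ≠ d ∧ c ≠ d) :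
    Function.Injective ![a, b, c, d] := by
  obtain ⟨hab, hac, had, hbc, hbd, hcd⟩ := h
  intro i j hij
  fin_cases i <;> fin_cases j <;> simp_all [eq_comm]

/-- Each static butterfly is counted exactly once under the vertex-priority scheme.
Let `pu, pw` be the priorities of the upper-layer vertices `u, w` and `pv, px` those
of the lower-layer vertices `v, x`, all pairwise distinct.  Index the four ordered
same-layer (start, end) pairs, together with the corresponding opposite-layer
middle-vertices, as quadruples `(p_s, p_o, p_{m1}, p_{m2})`:
`(u,w)`, `(w,u)` with middles `v, x`, and `(v,x)`, `(x,v)` with middles `u, w`.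
Then exactly one of these four pairs satisfies the priority condition
`p_s > p_{m1}`, `p_s > p_{m2}` and `p_s > p_o` for both of its wedges. -/
theorem butterfly_counted_once_by_priority (pu pw pv px : ℝ)
    (hdist : pu ≠ pw ∧ pu ≠ pv ∧ pu ≠ px ∧ pw ≠ pv ∧ pw ≠ px ∧ pv ≠ px) :
    ∃! i : Fin 4,
      (fun q : ℝ × ℝ × ℝ × ℝ => q.1 > q.2.2.1 ∧ q.1 > q.2.2.2 ∧ q.1 > q.2.1)
        (![(pu, pw, pv, px), (pw, pu, pv, px), (pv, px, pu, pw), (px, pv, pu, pw)] i) := by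
  have start_is_max : ∀ i : Fin 4,
      (fun q : ℝ × ℝ × ℝ × ℝ => q.1 > q.2.2.1 ∧ q.1 > q.2.2.2 ∧ q.1 > q.2.1)
          (![(pu, pw, pv, px), (pw, pu, pv, px), (pv, px, pu, pw), (px, pv, pu, pw)] i) ↔
        ∀ j, j ≠ i → ![pu, pw, pv, px] j < ![pu, pw, pv, px] i := by
    intro i
    fin_cases i <;> simp [Fin.forall_fin_succ] <;> tauto
  exact (existsUnique_congr start_is_max).mpr
    (injective_vec4_of_pairwise_ne hdist).existsUnique_forall_ne_lt
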